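/- The defined operator ∘*α := (α∧∘α∧∘∘α) ∨ (¬α∧∘α∧∘∘α) is a consistency operator for LFI3: (1) for all formulas α, β: ∘*α, α, ¬α ⊨_LFI3 β; (2) for distinct atoms p, q: ∘*p, p ⊭_LFI3 q; (3) for distinct atoms p, q: ∘*p, ¬p ⊭_LFI3 q. -/

import Mathlib

/-- Formulas of the language with ¬, ∘, ∧, ∨, →. -/
inductive Fm : Type
  | atom : Nat → Fm
  | neg : Fm → Fm
  | circ : Fm → Fm
  | conj : Fm → Fm → Fm
  | disj : Fm → Fm → Fm
  | impl : Fm → Fm → Fm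

/-- The five truth values of LFI3: T=(1,0,0), t=(1,0,1), b=(1,1,1), f=(0,1,1), F=(0,1,0). -/
inductive V5 : Type
  | T | t | b | f | F
deriving DecidableEq

open V5

/-- Rank in the linear order F < f < b < t < T. -/
def rk : V5 → Nat
  | F => 0 | f => 1 | b => 2 | t => 3 | T => 4

/-- Infimum in the linear order F < f < b < t < T. -/
def min5 (x y : V5) : V5 := if rk x ≤ rk y then x else y

/-- Supremum in the linear order F < f < b < t < T. -/
def max5 (x y : V5) : V5 := if rk x ≤ rk y then y else x

/-- Negation: ¬(a₁,a₂,a₃) = (a₂,a₁,a₃). -/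
def neg5 : V5 → V5
  | T => F | t => f | b => b | f => t | F => T

/-- Consistency: ∘(a₁,a₂,a₃) = (~(a₁∧a₂), a₃, a₃∧~(a₁∧a₂)). -/
def circ5 : V5 → V5
  | T => T | t => b | b => F | f => b | F => T

/-- Strong negation ~a := ¬a ∧ ∘a. -/
def snd5 (x : V5) : V5 := min5 (neg5 x) (circ5 x)

/-- Implication a→b := ~a ∨ b. -/
def imp5 (x y : V5) : V5 := max5 (snd5 x) y

/-- Designated values: D = {T, t, b}. -/
def des (x : V5) : Prop := 2 ≤ rk x

/-- The valuation (homomorphism into the LFI3 algebra) extending an atom assignment. -/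
def ev (v : Nat → V5) : Fm → V5
  | Fm.atom n => v n
  | Fm.neg a => neg5 (ev v a)
  | Fm.circ a => circ5 (ev v a)
  | Fm.conj a c => min5 (ev v a) (ev v c)
  | Fm.disj a c => max5 (ev v a) (ev v c)
  | Fm.impl a c => imp5 (ev v a) (ev v c)

/-- Semantical consequence of LFI3. -/
def L3Cons (Γ : Set Fm) (ψ : Fm) : Prop :=
  ∀ v : Nat → V5, (∀ γ ∈ Γ, des (ev v γ)) → des (ev v ψ)

/-- The defined operator ∘*α := (α∧∘α∧∘∘α) ∨ (¬α∧∘α∧∘∘α). -/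
def cstar (a : Fm) : Fm :=
  ((a.conj a.circ).conj a.circ.circ).disj ((a.neg.conj a.circ).conj a.circ.circ)

/- The truth function of ∘* is designated exactly at the classical values `T` and `F`, whereas
`α` and `¬α` are both designated only at the paradoxical value `b`; so the premises `∘*α, α, ¬α`
are never jointly designated. For the two non-consequences, the valuations sending `p` to `T`,
respectively to `F`, designate the premises, and sending `q` to `F` refutes the conclusion. -/

instance (x : V5) : Decidable (des x) := inferInstanceAs (Decidable (2 ≤ rk x))

def cstar5 (x : V5) : V5 :=
  max5 (min5 (min5 x (circ5 x)) (circ5 (circ5 x)))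
    (min5 (min5 (neg5 x) (circ5 x)) (circ5 (circ5 x)))

@[simp]
theorem ev_cstar (v : Nat → V5) (a : Fm) : ev v (cstar a) = cstar5 (ev v a) := rfl

theorem des_cstar5_iff (x : V5) : des (cstar5 x) ↔ x = T ∨ x = F := by
  cases x <;> decide

theorem des_and_des_neg5_iff (x : V5) : des x ∧ des (neg5 x) ↔ x = b := by
  cases x <;> decide

theorem l3Cons_explosion (α β : Fm) : L3Cons {cstar α, α, α.neg} β := by
  intro v hv
  have hcstar := hv (cstar α) (by simp)
  have hα := hv α (by simp)
  have hneg := hv α.neg (by simp)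
  rw [ev_cstar, des_cstar5_iff] at hcstar
  rw [ev] at hneg
  rw [(des_and_des_neg5_iff _).1 ⟨hα, hneg⟩] at hcstar
  simp at hcstar

theorem not_l3Cons_of_valuation {Γ : Set Fm} {ψ : Fm} (v : Nat → V5)
    (hΓ : ∀ γ ∈ Γ, des (ev v γ)) (hψ : ¬ des (ev v ψ)) : ¬ L3Cons Γ ψ :=
  fun h => hψ (h v hΓ)

theorem not_l3Cons_cstar_atom {p q : Nat} (hpq : p ≠ q) :
    ¬ L3Cons {cstar (Fm.atom p), Fm.atom p} (Fm.atom q) := by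
  refine not_l3Cons_of_valuation (fun n => if n = p then T else F) ?_ ?_
  · simp only [Set.mem_insert_iff, Set.mem_singleton_iff, forall_eq_or_imp, forall_eq,
      ev_cstar, ev, if_pos]
    decide
  · simp only [ev, if_neg hpq.symm]
    decide

theorem not_l3Cons_cstar_neg_atom (p q : Nat) :
    ¬ L3Cons {cstar (Fm.atom p), (Fm.atom p).neg} (Fm.atom q) := by
  refine not_l3Cons_of_valuation (fun _ => F) ?_ ?_
  · simp only [Set.mem_insert_iff, Set.mem_singleton_iff, forall_eq_or_imp, forall_eq,
      ev_cstar, ev]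
    decide
  · show ¬ des F
    decide

/-- ∘* is a consistency operator for LFI3 (p = atom 0 and q = atom 1 are distinct atoms). -/
theorem stmt15 :
    (∀ α β : Fm, L3Cons {cstar α, α, α.neg} β) ∧
    (¬ L3Cons {cstar (Fm.atom 0), Fm.atom 0} (Fm.atom 1)) ∧
    (¬ L3Cons {cstar (Fm.atom 0), (Fm.atom 0).neg} (Fm.atom 1)) :=
  ⟨l3Cons_explosion, not_l3Cons_cstar_atom zero_ne_one, not_l3Cons_cstar_neg_atom 0 1⟩
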